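/- In so(n+1) ⊂ gl(n+1, ℝ) with n ≥ 2, let a = e_{21} − e_{12} and for 3 ≤ α ≤ n+1 set k_α = e_{α2} − e_{2α}. Let g : ℝ² → SO(n+1) be smooth such that g⁻¹ ∂_x g = Σ_α u_α k_α for smooth functions u_α : ℝ² → ℝ, and g⁻¹ ∂_t g = Q_3, where ‖u‖² = Σ_α u_α² and Q_3 = −Σ_α ((u_α)_{xx} + (‖u‖²/2) u_α) k_α + Σ_{α,β} (u_β (u_α)_x − u_α (u_β)_x) e_{αβ}. Then the curve γ := g a g⁻¹, which takes values in the unit sphere S^{n−1} (the Ad(SO(n))-orbit of a) with respect to the inner product ⟨A, B⟩ = −(1/2) tr(A B), satisfies ∂_t γ = −(∂_x³ γ + 3 ⟨∂_x γ, ∂_x² γ⟩ γ + (3/2) ‖∂_x γ‖² ∂_x γ), where ‖A‖² = ⟨A, A⟩. -/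

import Mathlib

open Matrix Finset
open scoped ContDiff

attribute [local instance] Matrix.frobeniusNormedAddCommGroup Matrix.frobeniusNormedSpace

attribute [local instance] Matrix.frobeniusNormedRing Matrix.frobeniusNormedAlgebra

section Stmt16Aux
set_option linter.unusedSectionVars false

lemma stmt16_transpose_stdBasisMatrix {N : ℕ} (i j : Fin N) (c : ℝ) :
    (Matrix.single i j c)ᵀ = Matrix.single j i c := by
  ext p q
  simp [Matrix.single, and_comm]

variable {ι : Type*} [Fintype ι] [DecidableEq ι] {m : ℕ}

lemma stmt16_sum_mul_sum_smul (c d : ι → ℝ) (f g : ι → Matrix (Fin m) (Fin m) ℝ) :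
    (∑ β, c β • f β) * (∑ α, d α • g α) = ∑ β, ∑ α, (c β * d α) • (f β * g α) := by
  rw [Finset.sum_mul]
  refine Finset.sum_congr rfl fun β _ => ?_
  rw [Finset.mul_sum]
  refine Finset.sum_congr rfl fun α _ => ?_
  rw [Matrix.smul_mul, Matrix.mul_smul, smul_smul]

lemma stmt16_sum_bracket (k p : ι → Matrix (Fin m) (Fin m) ℝ) (a : Matrix (Fin m) (Fin m) ℝ)
    (h : ∀ α, k α * a - a * k α = p α) (c : ι → ℝ) :
    (∑ α, c α • k α) * a - a * (∑ α, c α • k α) = ∑ α, c α • p α := by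
  rw [Finset.sum_mul, Finset.mul_sum, ← Finset.sum_sub_distrib]
  refine Finset.sum_congr rfl fun α _ => ?_
  rw [Matrix.smul_mul, Matrix.mul_smul, ← smul_sub, h]

lemma stmt16_bracket_collapse (k p : ι → Matrix (Fin m) (Fin m) ℝ) (a : Matrix (Fin m) (Fin m) ℝ)
    (h : ∀ β α, k β * p α - p α * k β = if β = α then -a else 0)
    (c d : ι → ℝ) :
    (∑ β, c β • k β) * (∑ α, d α • p α) - (∑ α, d α • p α) * (∑ β, c β • k β)
      = -((∑ α, c α * d α) • a) := by
  have hswap : (∑ α, ∑ β, (d α * c β) • (p α * k β))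
      = ∑ β, ∑ α, (d α * c β) • (p α * k β) := Finset.sum_comm
  rw [stmt16_sum_mul_sum_smul, stmt16_sum_mul_sum_smul, hswap, ← Finset.sum_sub_distrib]
  have key : ∀ β ∈ Finset.univ (α := ι), (∑ α, (c β * d α) • (k β * p α)) -
      (∑ α, (d α * c β) • (p α * k β)) = (c β * d β) • (-a) := by
    intro β _
    rw [← Finset.sum_sub_distrib]
    have e1 : ∀ α ∈ Finset.univ (α := ι), (c β * d α) • (k β * p α) - (d α * c β) • (p α * k β)
        = if β = α then (c β * d β) • (-a) else 0 := by
      intro α _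
      rw [mul_comm (d α) (c β), ← smul_sub, h]
      by_cases hh : β = α
      · subst hh; simp
      · simp [hh]
    rw [Finset.sum_congr rfl e1, Finset.sum_ite_eq]
    simp
  rw [Finset.sum_congr rfl key]
  simp [smul_neg, ← Finset.sum_smul]

lemma stmt16_trace_sum_sum (p : ι → Matrix (Fin m) (Fin m) ℝ)
    (h : ∀ α β, (p α * p β).trace = if α = β then -2 else 0) (c d : ι → ℝ) :
    ((∑ α, c α • p α) * (∑ β, d β • p β)).trace = -2 * ∑ α, c α * d α := by
  rw [stmt16_sum_mul_sum_smul, Matrix.trace_sum]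
  have key : ∀ α ∈ Finset.univ (α := ι),
      (∑ β, (c α * d β) • (p α * p β)).trace = -2 * (c α * d α) := by
    intro α _
    rw [Matrix.trace_sum]
    have e1 : ∀ β ∈ Finset.univ (α := ι), ((c α * d β) • (p α * p β)).trace
        = if α = β then -2 * (c α * d β) else 0 := by
      intro β _
      rw [Matrix.trace_smul, h]
      by_cases hh : α = β
      · subst hh; simp [smul_eq_mul]; ring
      · simp [hh]
    rw [Finset.sum_congr rfl e1, Finset.sum_ite_eq]
    simp
  rw [Finset.sum_congr rfl key, ← Finset.mul_sum]

lemma stmt16_trace_sum_smul (p : ι → Matrix (Fin m) (Fin m) ℝ) (a : Matrix (Fin m) (Fin m) ℝ)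
    (h : ∀ α, (p α * a).trace = 0) (c : ι → ℝ) (r : ℝ) :
    ((∑ α, c α • p α) * (r • a)).trace = 0 := by
  rw [Finset.sum_mul, Matrix.trace_sum]
  refine Finset.sum_eq_zero fun α _ => ?_
  rw [Matrix.smul_mul, Matrix.mul_smul, Matrix.trace_smul, Matrix.trace_smul, h]
  simp

lemma stmt16_sum_e_bracket (e : ι → ι → Matrix (Fin m) (Fin m) ℝ) (a : Matrix (Fin m) (Fin m) ℝ)
    (h : ∀ α β, e α β * a = 0) (h' : ∀ α β, a * e α β = 0) (d : ι → ι → ℝ) :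
    (∑ α, ∑ β, d α β • e α β) * a - a * (∑ α, ∑ β, d α β • e α β) = 0 := by
  rw [Finset.sum_mul, Finset.mul_sum]
  have e1 : ∀ α ∈ Finset.univ (α := ι), (∑ β, d α β • e α β) * a = 0 := by
    intro α _
    rw [Finset.sum_mul]
    exact Finset.sum_eq_zero fun β _ => by rw [Matrix.smul_mul, h, smul_zero]
  have e2 : ∀ α ∈ Finset.univ (α := ι), a * (∑ β, d α β • e α β) = 0 := by
    intro α _
    rw [Finset.mul_sum]
    exact Finset.sum_eq_zero fun β _ => by rw [Matrix.mul_smul, h', smul_zero]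
  rw [Finset.sum_congr rfl e1, Finset.sum_congr rfl e2]
  simp

lemma stmt16_hasDerivAt_transpose {f : ℝ → Matrix (Fin m) (Fin m) ℝ}
    {f' : Matrix (Fin m) (Fin m) ℝ} {x : ℝ} (hf : HasDerivAt f f' x) :
    HasDerivAt (fun s => (f s)ᵀ) f'ᵀ x := by
  have h := ((Matrix.transposeLinearEquiv (Fin m) (Fin m) ℝ
    ℝ).toLinearMap.toContinuousLinearMap).hasFDerivAt.comp_hasDerivAt x hf
  exact h

lemma stmt16_conj_hasDerivAt {G C : ℝ → Matrix (Fin m) (Fin m) ℝ} {x : ℝ}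
    {W C' : Matrix (Fin m) (Fin m) ℝ}
    (hG : HasDerivAt G (G x * W) x) (hW : Wᵀ = -W)
    (hC : HasDerivAt C C' x) :
    HasDerivAt (fun s => G s * C s * (G s)ᵀ)
      (G x * (W * C x - C x * W + C') * (G x)ᵀ) x := by
  have h1 := (hG.mul hC).mul (stmt16_hasDerivAt_transpose hG)
  refine h1.congr_deriv ?_
  rw [Matrix.transpose_mul, hW, Pi.mul_apply]
  noncomm_ring

lemma stmt16_conj_trace (G A B : Matrix (Fin m) (Fin m) ℝ) (h : Gᵀ * G = 1) :
    (G * A * Gᵀ * (G * B * Gᵀ)).trace = (A * B).trace := by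
  have e : G * A * Gᵀ * (G * B * Gᵀ) = G * (A * B) * Gᵀ := by
    calc G * A * Gᵀ * (G * B * Gᵀ) = G * A * (Gᵀ * G) * (B * Gᵀ) := by noncomm_ring
    _ = G * (A * B) * Gᵀ := by rw [h]; noncomm_ring
  rw [e, Matrix.trace_mul_cycle, ← Matrix.mul_assoc, h, one_mul]

end Stmt16Aux


/-- In `so(n+1)` with `n ≥ 2`, let `a = e₂₁ − e₁₂` and `k_α = e_{α2} − e_{2α}` for
`3 ≤ α ≤ n+1` (indexed here by `α : Fin (n-1)`).  Let `g : ℝ² → SO(n+1)` be smooth with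
`g⁻¹ ∂ₓ g = Σ_α u_α k_α` and `g⁻¹ ∂ₜ g = Q₃`, where
`Q₃ = −Σ_α ((u_α)_xx + (‖u‖²/2) u_α) k_α + Σ_{α,β} (u_β (u_α)_x − u_α (u_β)_x) e_{αβ}`.
Then `γ := g a g⁻¹` takes values in the unit sphere for `⟨A,B⟩ = −(1/2) tr(AB)` and
satisfies `∂ₜ γ = −(∂ₓ³ γ + 3 ⟨∂ₓ γ, ∂ₓ² γ⟩ γ + (3/2) ‖∂ₓ γ‖² ∂ₓ γ)`. -/
theorem stmt_16 (n : ℕ) (hn : 2 ≤ n)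
    (a : Matrix (Fin (n + 1)) (Fin (n + 1)) ℝ)
    (ha : a = Matrix.single ⟨1, by omega⟩ ⟨0, by omega⟩ 1
      - Matrix.single ⟨0, by omega⟩ ⟨1, by omega⟩ 1)
    (kmat : Fin (n - 1) → Matrix (Fin (n + 1)) (Fin (n + 1)) ℝ)
    (hkmat : ∀ α : Fin (n - 1), kmat α
      = Matrix.single ⟨(α : ℕ) + 2, by have := α.isLt; omega⟩ ⟨1, by omega⟩ 1
        - Matrix.single ⟨1, by omega⟩ ⟨(α : ℕ) + 2, by have := α.isLt; omega⟩ 1)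
    (emat : Fin (n - 1) → Fin (n - 1) → Matrix (Fin (n + 1)) (Fin (n + 1)) ℝ)
    (hemat : ∀ α β : Fin (n - 1), emat α β
      = Matrix.single ⟨(α : ℕ) + 2, by have := α.isLt; omega⟩
          ⟨(β : ℕ) + 2, by have := β.isLt; omega⟩ 1)
    (g : ℝ → ℝ → Matrix (Fin (n + 1)) (Fin (n + 1)) ℝ)
    (hg : ContDiff ℝ ∞ (Function.uncurry g))
    (hgSO : ∀ x t : ℝ, g x t ∈ Matrix.specialOrthogonalGroup (Fin (n + 1)) ℝ)
    (uu : Fin (n - 1) → ℝ → ℝ → ℝ)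
    (huu : ∀ α, ContDiff ℝ ∞ (Function.uncurry (uu α)))
    (hgx : ∀ x t : ℝ,
      (g x t)ᵀ * deriv (fun s => g s t) x = ∑ α, uu α x t • kmat α)
    (hgt : ∀ x t : ℝ,
      (g x t)ᵀ * deriv (fun s => g x s) t
        = -(∑ α, (deriv (deriv (fun s => uu α s t)) x
              + ((∑ β, uu β x t ^ 2) / 2) * uu α x t) • kmat α)
          + ∑ α, ∑ β,
              (uu β x t * deriv (fun s => uu α s t) x
                - uu α x t * deriv (fun s => uu β s t) x) • emat α β) :
    (∀ x t : ℝ,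
        -(1 / 2 : ℝ) * ((g x t * a * (g x t)ᵀ) * (g x t * a * (g x t)ᵀ)).trace = 1) ∧
      (∀ x t : ℝ,
        deriv (fun s => g x s * a * (g x s)ᵀ) t
          = -(deriv (deriv (deriv (fun s => g s t * a * (g s t)ᵀ))) x
              + (3 * (-(1 / 2 : ℝ)
                  * (deriv (fun s => g s t * a * (g s t)ᵀ) x
                      * deriv (deriv (fun s => g s t * a * (g s t)ᵀ)) x).trace))
                  • (g x t * a * (g x t)ᵀ)
              + ((3 / 2 : ℝ) * (-(1 / 2 : ℝ)
                  * (deriv (fun s => g s t * a * (g s t)ᵀ) x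
                      * deriv (fun s => g s t * a * (g s t)ᵀ) x).trace))
                  • deriv (fun s => g s t * a * (g s t)ᵀ) x)) := by
    -- index setup
  have hα2 : ∀ α : Fin (n - 1), (α : ℕ) + 2 < n + 1 := fun α => by have := α.isLt; omega
  set i0 : Fin (n + 1) := ⟨0, by omega⟩ with i0def
  set i1 : Fin (n + 1) := ⟨1, by omega⟩ with i1def
  set ih : Fin (n - 1) → Fin (n + 1) := fun α => ⟨(α : ℕ) + 2, hα2 α⟩ with ihdef
  have h10 : i1 ≠ i0 := by simp [i1def, i0def, Fin.ext_iff]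
  have h01 : i0 ≠ i1 := h10.symm
  have hh0 : ∀ α, ih α ≠ i0 := fun α => by simp [ihdef, i0def, Fin.ext_iff]
  have h0h : ∀ α, i0 ≠ ih α := fun α => (hh0 α).symm
  have hh1 : ∀ α, ih α ≠ i1 := fun α => by simp [ihdef, i1def, Fin.ext_iff]
  have h1h : ∀ α, i1 ≠ ih α := fun α => (hh1 α).symm
  have hhh : ∀ α β : Fin (n - 1), α ≠ β → ih α ≠ ih β := by
    intro α β hab
    simp only [ihdef, ne_eq, Fin.mk.injEq, add_left_inj]
    exact fun h => hab (Fin.ext h)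
  have ha' : a = Matrix.single i1 i0 1 - Matrix.single i0 i1 1 := ha
  have hk' : ∀ α, kmat α = Matrix.single (ih α) i1 1
      - Matrix.single i1 (ih α) 1 := hkmat
  have he' : ∀ α β, emat α β = Matrix.single (ih α) (ih β) 1 := hemat
  set pmat : Fin (n - 1) → Matrix (Fin (n + 1)) (Fin (n + 1)) ℝ :=
    fun α => Matrix.single (ih α) i0 1 - Matrix.single i0 (ih α) 1 with pmatdef
  -- pointwise matrix identities
  have hka : ∀ α, kmat α * a - a * kmat α = pmat α := by
    intro α
    simp only [hk', ha', pmatdef, sub_mul, mul_sub]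
    simp [h10, h01, hh0 α, hh1 α, h0h α, h1h α]
  have hkp : ∀ β α, kmat β * pmat α - pmat α * kmat β = if β = α then -a else 0 := by
    intro β α
    by_cases hab : β = α
    · subst hab
      simp only [hk', pmatdef, ha', if_pos rfl, sub_mul, mul_sub]
      simp [h10, h01, hh0 β, hh1 β, h0h β, h1h β]
      try abel
    · simp only [hk', pmatdef, if_neg hab, sub_mul, mul_sub]
      simp [h10, h01, hh0 α, hh1 α, h0h α, h1h α, hh0 β, hh1 β, h0h β, h1h β,
        hhh β α hab, hhh α β (fun h => hab h.symm)]
  have hea : ∀ α β, emat α β * a = 0 := by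
    intro α β
    simp only [he', ha', mul_sub]
    simp [hh1 β, hh0 β]
  have hae : ∀ α β, a * emat α β = 0 := by
    intro α β
    simp only [he', ha', sub_mul]
    simp [h0h α, h1h α]
  have hpp : ∀ α β, (pmat α * pmat β).trace = if α = β then -2 else 0 := by
    intro α β
    by_cases hab : α = β
    · subst hab
      simp only [pmatdef, if_pos rfl, sub_mul, mul_sub]
      simp [hh0 α, h0h α]
      norm_num
    · simp only [pmatdef, if_neg hab, sub_mul, mul_sub]
      simp [hh0 α, h0h α, hh0 β, h0h β, hhh α β hab, hhh β α (fun h => hab h.symm)]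
  have hpa : ∀ α, (pmat α * a).trace = 0 := by
    intro α
    simp only [pmatdef, ha', sub_mul, mul_sub]
    simp [h01, h10, hh1 α, hh0 α, h1h α, h0h α]
  have haa : (a * a).trace = -2 := by
    simp only [ha', sub_mul, mul_sub]
    simp [h01, h10]
    norm_num
  -- orthogonality
  have horth : ∀ x t : ℝ, (g x t)ᵀ * g x t = 1 ∧ g x t * (g x t)ᵀ = 1 := by
    intro x t
    have h1 := (Matrix.mem_specialOrthogonalGroup_iff.mp (hgSO x t)).1
    rw [Matrix.mem_orthogonalGroup_iff] at h1
    have hstar : star (g x t) = (g x t)ᵀ := by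
      rw [Matrix.star_eq_conjTranspose, Matrix.conjTranspose_eq_transpose_of_trivial]
    exact ⟨by rwa [mul_eq_one_comm] at h1, h1⟩
  constructor
  · intro x t
    rw [stmt16_conj_trace _ _ _ (horth x t).1, haa]
    norm_num
  · intro x t
    have h1le : (1 : WithTop ℕ∞) ≤ ∞ := by exact_mod_cast le_top
    have hGx : ContDiff ℝ ∞ (fun s => g s t) := hg.comp (contDiff_id.prodMk contDiff_const)
    have hGt : ContDiff ℝ ∞ (fun s => g x s) := hg.comp (contDiff_const.prodMk contDiff_id)
    have hUx : ∀ α, ContDiff ℝ ∞ (fun s => uu α s t) :=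
      fun α => (huu α).comp (contDiff_id.prodMk contDiff_const)
    have hUd : ∀ α y, HasDerivAt (fun s => uu α s t) (deriv (fun s => uu α s t) y) y :=
      fun α y => (((hUx α).differentiable (by simp)) y).hasDerivAt
    have hU1 : ∀ α, ContDiff ℝ ∞ (deriv (fun s => uu α s t)) :=
      fun α => (contDiff_infty_iff_deriv.mp (hUx α)).2
    have hU1d : ∀ α y, HasDerivAt (deriv (fun s => uu α s t))
        (deriv (deriv (fun s => uu α s t)) y) y :=
      fun α y => (((hU1 α).differentiable (by simp)) y).hasDerivAt
    -- skew-symmetry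
    have hkskew : ∀ α, (kmat α)ᵀ = -kmat α := by
      intro α
      rw [hk', Matrix.transpose_sub, stmt16_transpose_stdBasisMatrix,
        stmt16_transpose_stdBasisMatrix, neg_sub]
    have hKskew : ∀ y, (∑ α, uu α y t • kmat α)ᵀ = -(∑ α, uu α y t • kmat α) := by
      intro y
      rw [Matrix.transpose_sum, ← Finset.sum_neg_distrib]
      exact Finset.sum_congr rfl fun α _ => by
        rw [Matrix.transpose_smul, hkskew, smul_neg]
    -- x-derivative of g
    have hGd : ∀ y, HasDerivAt (fun s => g s t) (g y t * ∑ α, uu α y t • kmat α) y := by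
      intro y
      have hD : HasDerivAt (fun s => g s t) (deriv (fun s => g s t) y) y :=
        (((hGx).differentiable (by simp)) y).hasDerivAt
      have e : deriv (fun s => g s t) y = g y t * ∑ α, uu α y t • kmat α := by
        conv_lhs => rw [← one_mul (deriv (fun s => g s t) y), ← (horth y t).2,
          Matrix.mul_assoc, hgx y t]
      rwa [e] at hD
    -- first x-derivative of γ
    have hd1 : ∀ y, HasDerivAt (fun s => g s t * a * (g s t)ᵀ)
        (g y t * (∑ α, uu α y t • pmat α) * (g y t)ᵀ) y := by
      intro y
      have h := stmt16_conj_hasDerivAt (hGd y) (hKskew y) (hasDerivAt_const y a)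
      rwa [add_zero, stmt16_sum_bracket kmat pmat a hka] at h
    have hD1 : deriv (fun s => g s t * a * (g s t)ᵀ)
        = fun y => g y t * (∑ α, uu α y t • pmat α) * (g y t)ᵀ :=
      funext fun y => (hd1 y).deriv
    -- second x-derivative
    have hC1d : ∀ y, HasDerivAt (fun s => ∑ α, uu α s t • pmat α)
        (∑ α, deriv (fun s => uu α s t) y • pmat α) y :=
      fun y => HasDerivAt.fun_sum fun α _ => (hUd α y).smul_const (pmat α)
    have hd2 : ∀ y, HasDerivAt (fun s => g s t * (∑ α, uu α s t • pmat α) * (g s t)ᵀ)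
        (g y t * ((∑ α, deriv (fun s => uu α s t) y • pmat α)
          - (∑ α, uu α y t ^ 2) • a) * (g y t)ᵀ) y := by
      intro y
      have h := stmt16_conj_hasDerivAt (hGd y) (hKskew y) (hC1d y)
      have e : (∑ α, uu α y t • kmat α) * (∑ α, uu α y t • pmat α)
          - (∑ α, uu α y t • pmat α) * (∑ α, uu α y t • kmat α)
          + (∑ α, deriv (fun s => uu α s t) y • pmat α)
          = (∑ α, deriv (fun s => uu α s t) y • pmat α) - (∑ α, uu α y t ^ 2) • a := by
        rw [stmt16_bracket_collapse kmat pmat a hkp]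
        have e2 : (∑ α, uu α y t * uu α y t) = ∑ α, uu α y t ^ 2 :=
          Finset.sum_congr rfl fun α _ => (pow_two (uu α y t)).symm
        rw [e2]
        abel
      rwa [e] at h
    have hD2 : deriv (fun y => g y t * (∑ α, uu α y t • pmat α) * (g y t)ᵀ)
        = fun y => g y t * ((∑ α, deriv (fun s => uu α s t) y • pmat α)
          - (∑ α, uu α y t ^ 2) • a) * (g y t)ᵀ :=
      funext fun y => (hd2 y).deriv
    -- third x-derivative at x
    have hsq : HasDerivAt (fun y => ∑ α, uu α y t ^ 2)
        (∑ α, 2 * uu α x t * deriv (fun s => uu α s t) x) x := by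
      refine HasDerivAt.fun_sum fun α _ => ?_
      have h := (hUd α x).fun_pow 2
      norm_num at h
      convert h using 1
      try ring
    have hC2d : HasDerivAt (fun y => (∑ α, deriv (fun s => uu α s t) y • pmat α)
        - (∑ α, uu α y t ^ 2) • a)
        ((∑ α, deriv (deriv (fun s => uu α s t)) x • pmat α)
          - (∑ α, 2 * uu α x t * deriv (fun s => uu α s t) x) • a) x := by
      refine HasDerivAt.sub ?_ (hsq.smul_const a)
      exact HasDerivAt.fun_sum fun α _ => (hU1d α x).smul_const (pmat α)
    have hd3 := stmt16_conj_hasDerivAt (hGd x) (hKskew x) hC2d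
    -- t-derivative of g
    have hQd : HasDerivAt (fun s => g x s)
        (g x t * (-(∑ α, (deriv (deriv (fun s => uu α s t)) x
              + ((∑ β, uu β x t ^ 2) / 2) * uu α x t) • kmat α)
          + ∑ α, ∑ β, (uu β x t * deriv (fun s => uu α s t) x
              - uu α x t * deriv (fun s => uu β s t) x) • emat α β)) t := by
      have hD : HasDerivAt (fun s => g x s) (deriv (fun s => g x s) t) t :=
        (((hGt).differentiable (by simp)) t).hasDerivAt
      have e : deriv (fun s => g x s) t = g x t * (-(∑ α, (deriv (deriv (fun s => uu α s t)) x
              + ((∑ β, uu β x t ^ 2) / 2) * uu α x t) • kmat α)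
          + ∑ α, ∑ β, (uu β x t * deriv (fun s => uu α s t) x
              - uu α x t * deriv (fun s => uu β s t) x) • emat α β) := by
        conv_lhs => rw [← one_mul (deriv (fun s => g x s) t), ← (horth x t).2,
          Matrix.mul_assoc, hgt x t]
      rwa [e] at hD
    have heT : ∀ α β : Fin (n - 1), (emat α β)ᵀ = emat β α := by
      intro α β
      rw [he', he', stmt16_transpose_stdBasisMatrix]
    have hQskew : (-(∑ α, (deriv (deriv (fun s => uu α s t)) x
              + ((∑ β, uu β x t ^ 2) / 2) * uu α x t) • kmat α)
          + ∑ α, ∑ β, (uu β x t * deriv (fun s => uu α s t) x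
              - uu α x t * deriv (fun s => uu β s t) x) • emat α β)ᵀ
        = -(-(∑ α, (deriv (deriv (fun s => uu α s t)) x
              + ((∑ β, uu β x t ^ 2) / 2) * uu α x t) • kmat α)
          + ∑ α, ∑ β, (uu β x t * deriv (fun s => uu α s t) x
              - uu α x t * deriv (fun s => uu β s t) x) • emat α β) := by
      have hXT : (∑ α, (deriv (deriv (fun s => uu α s t)) x
            + ((∑ β, uu β x t ^ 2) / 2) * uu α x t) • kmat α)ᵀ
          = -(∑ α, (deriv (deriv (fun s => uu α s t)) x
            + ((∑ β, uu β x t ^ 2) / 2) * uu α x t) • kmat α) := by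
        rw [Matrix.transpose_sum, ← Finset.sum_neg_distrib]
        exact Finset.sum_congr rfl fun α _ => by
          rw [Matrix.transpose_smul, hkskew, smul_neg]
      have hET : (∑ α, ∑ β, (uu β x t * deriv (fun s => uu α s t) x
              - uu α x t * deriv (fun s => uu β s t) x) • emat α β)ᵀ
          = -(∑ α, ∑ β, (uu β x t * deriv (fun s => uu α s t) x
              - uu α x t * deriv (fun s => uu β s t) x) • emat α β) := by
        calc (∑ α, ∑ β, (uu β x t * deriv (fun s => uu α s t) x
              - uu α x t * deriv (fun s => uu β s t) x) • emat α β)ᵀ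
            = ∑ α, ∑ β, (uu β x t * deriv (fun s => uu α s t) x
              - uu α x t * deriv (fun s => uu β s t) x) • emat β α := by
              rw [Matrix.transpose_sum]
              refine Finset.sum_congr rfl fun α _ => ?_
              rw [Matrix.transpose_sum]
              exact Finset.sum_congr rfl fun β _ => by rw [Matrix.transpose_smul, heT]
          _ = ∑ β, ∑ α, (uu β x t * deriv (fun s => uu α s t) x
              - uu α x t * deriv (fun s => uu β s t) x) • emat β α := Finset.sum_comm
          _ = -(∑ α, ∑ β, (uu β x t * deriv (fun s => uu α s t) x
              - uu α x t * deriv (fun s => uu β s t) x) • emat α β) := by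
              rw [← Finset.sum_neg_distrib]
              refine Finset.sum_congr rfl fun β _ => ?_
              rw [← Finset.sum_neg_distrib]
              refine Finset.sum_congr rfl fun α _ => ?_
              rw [← neg_smul]
              congr 1
              ring
      rw [Matrix.transpose_add, Matrix.transpose_neg, hXT, hET]
      abel
    have hdt := stmt16_conj_hasDerivAt hQd hQskew (hasDerivAt_const t a)
    refine hdt.deriv.trans ?_
    simp only [hD1, hD2]
    erw [hd3.deriv]
    -- traces
    rw [stmt16_conj_trace _ _ _ (horth x t).1, stmt16_conj_trace _ _ _ (horth x t).1]
    have htr1 : ((∑ α, uu α x t • pmat α) * ((∑ α, deriv (fun s => uu α s t) x • pmat α)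
          - (∑ α, uu α x t ^ 2) • a)).trace
        = -2 * ∑ α, uu α x t * deriv (fun s => uu α s t) x := by
      rw [mul_sub, Matrix.trace_sub, stmt16_trace_sum_sum pmat hpp,
        stmt16_trace_sum_smul pmat a hpa]
      ring
    have htr2 : ((∑ α, uu α x t • pmat α) * (∑ α, uu α x t • pmat α)).trace
        = -2 * ∑ α, uu α x t * uu α x t := stmt16_trace_sum_sum pmat hpp _ _
    rw [htr1, htr2]
    rw [show (3 : ℝ) * (-(1/2) * (-2 * ∑ α, uu α x t * deriv (fun s => uu α s t) x))
        = 3 * ∑ α, uu α x t * deriv (fun s => uu α s t) x from by ring,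
      show (3/2 : ℝ) * (-(1/2) * (-2 * ∑ α, uu α x t * uu α x t))
        = (3/2) * ∑ α, uu α x t * uu α x t from by ring]
    -- push scalars and negation inside the conjugation
    have hconjsmul : ∀ (c : ℝ) (M : Matrix (Fin (n+1)) (Fin (n+1)) ℝ),
        c • (g x t * M * (g x t)ᵀ) = g x t * (c • M) * (g x t)ᵀ := by
      intro c M
      rw [Matrix.mul_smul, Matrix.smul_mul]
    have hconjadd : ∀ M N : Matrix (Fin (n+1)) (Fin (n+1)) ℝ,
        g x t * M * (g x t)ᵀ + g x t * N * (g x t)ᵀ = g x t * (M + N) * (g x t)ᵀ := by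
      intro M N
      noncomm_ring
    have hconjneg : ∀ M : Matrix (Fin (n+1)) (Fin (n+1)) ℝ,
        -(g x t * M * (g x t)ᵀ) = g x t * (-M) * (g x t)ᵀ := by
      intro M
      noncomm_ring
    rw [hconjsmul, hconjsmul, hconjadd, hconjadd, hconjneg]
    -- the core Lie-algebraic identity
    congr 2
    rw [add_zero]
    have A1 := stmt16_sum_bracket kmat pmat a hka
      (fun α => deriv (deriv fun s => uu α s t) x + (∑ β, uu β x t ^ 2) / 2 * uu α x t)
    have A2 := stmt16_sum_e_bracket emat a hea hae
      (fun α β => uu β x t * deriv (fun s => uu α s t) x - uu α x t * deriv (fun s => uu β s t) x)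
    have A3 := stmt16_bracket_collapse kmat pmat a hkp
      (fun α => uu α x t) (fun α => deriv (fun s => uu α s t) x)
    have A4 := stmt16_sum_bracket kmat pmat a hka (fun α => uu α x t)
    have A5 : (∑ α, (deriv (deriv fun s => uu α s t) x
          + (∑ β, uu β x t ^ 2) / 2 * uu α x t) • pmat α)
        = (∑ α, deriv (deriv fun s => uu α s t) x • pmat α)
          + ((∑ β, uu β x t ^ 2) / 2) • (∑ α, uu α x t • pmat α) := by
      rw [Finset.smul_sum, ← Finset.sum_add_distrib]
      refine Finset.sum_congr rfl fun α _ => ?_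
      rw [add_smul, smul_smul]
    have A6 : (∑ α, 2 * uu α x t * deriv (fun s => uu α s t) x)
        = 2 * ∑ α, uu α x t * deriv (fun s => uu α s t) x := by
      rw [Finset.mul_sum]
      exact Finset.sum_congr rfl fun α _ => by ring
    have A7 : (∑ α, uu α x t * uu α x t) = ∑ α, uu α x t ^ 2 :=
      Finset.sum_congr rfl fun α _ => (pow_two _).symm
    set r : ℝ := ∑ α, uu α x t ^ 2 with rdef
    set S1 : ℝ := ∑ α, uu α x t * deriv (fun s => uu α s t) x with S1def
    set Pu := ∑ α, uu α x t • pmat α with Pudef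
    set Z2 := ∑ α, deriv (deriv fun s => uu α s t) x • pmat α with Z2def
    set V := ∑ α, deriv (fun s => uu α s t) x • pmat α with Vdef
    set K := ∑ α, uu α x t • kmat α with Kdef
    set Z := ∑ α, (deriv (deriv fun s => uu α s t) x + r / 2 * uu α x t) • kmat α with Zdef
    set E := ∑ α, ∑ β, (uu β x t * deriv (fun s => uu α s t) x
        - uu α x t * deriv (fun s => uu β s t) x) • emat α β with Edef
    rw [A5] at A1
    rw [A6, A7]
    have expand1 : (-Z + E) * a - a * (-Z + E) = -(Z * a - a * Z) + (E * a - a * E) := by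
      noncomm_ring
    have expand2 : K * (V - r • a) - (V - r • a) * K
        = (K * V - V * K) - r • (K * a - a * K) := by
      rw [mul_sub, sub_mul, Matrix.mul_smul, Matrix.smul_mul, smul_sub]
      abel
    rw [expand1, A1, A2, expand2, A3, A4]
    module
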